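/- arXiv:2112.10554 — 2 statements merged into one kernel-verified Lean document; each statement's English description precedes it below -/
import Mathlib

section
/- Let R be a commutative ℂ-algebra, n a natural number, λ a nonzero complex number, and N a nilpotent n×n complex matrix; set B = λ·1 + N. Let M be a skew-symmetric n×n matrix with entries in R such that M * B (with B viewed over R) is again skew-symmetric. Then there exists an n×n complex matrix S with S * S = B and M * B = Sᵀ * M * S (with S viewed over R); in particular S is invertible. -/
/-!
Since `B = λ + N` with `N` nilpotent, Newton's iteration for `X² - B` started at a square root
of `λ` converges after finitely many steps inside the commutative algebra `ℂ[B]`, so `B` has an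
invertible square root `S = p(B)` for a polynomial `p`. Skew-symmetry of `M` and `MB` says
`M B = Bᵀ M`; this intertwining passes to every polynomial in `B`, so `M S = Sᵀ M` and
`M B = M S S = Sᵀ M S`.
-/

open Matrix Polynomial

theorem exists_isUnit_sq_eq_sq_add_of_isNilpotent {A : Type*} [CommRing A] {a x : A}
    (ha : IsUnit (2 * a)) (hx : IsNilpotent x) :
    ∃ s : A, s ^ 2 = a ^ 2 + x ∧ IsUnit s := by
  obtain ⟨s, ⟨hs, hroot⟩, -⟩ := existsUnique_nilpotent_sub_and_aeval_eq_zero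
    (P := X ^ 2 - C (a ^ 2 + x)) (x := a) (by simpa using hx.neg)
    (by rw [derivative_sub, derivative_C, derivative_X_pow]; simpa using ha)
  refine ⟨s, by simpa [sub_eq_zero] using hroot, ?_⟩
  simpa using hs.neg.isUnit_add_left_of_commute (isUnit_of_mul_isUnit_right ha) (.all _ _)

open scoped IsMulCommutative in
theorem exists_isUnit_aeval_sq_eq_self {K A : Type*} [Field K] [IsAlgClosed K] [NeZero (2 : K)]
    [Ring A] [Algebra K A] {b : A} {c : K} (hc : c ≠ 0) (hb : IsNilpotent (b - algebraMap K A c)) :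
    ∃ p : K[X], aeval b p ^ 2 = b ∧ IsUnit (aeval b p) := by
  obtain ⟨μ, hμ⟩ := IsAlgClosed.exists_pow_nat_eq c two_pos
  have hμ0 : μ ≠ 0 := by rintro rfl; exact hc (by simpa using hμ.symm)
  set B := Algebra.adjoin K {b}
  have h2μ : IsUnit (2 * algebraMap K B μ) := by
    rw [← map_ofNat (algebraMap K B) 2, ← map_mul]
    exact (isUnit_iff_ne_zero.2 (mul_ne_zero two_ne_zero hμ0)).map _
  have hnil : IsNilpotent (⟨b, Algebra.self_mem_adjoin_singleton K b⟩ - algebraMap K B c) := by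
    refine (IsNilpotent.map_iff (f := B.val) Subtype.val_injective).1 ?_
    simpa using hb
  obtain ⟨s, hs2, hsu⟩ := exists_isUnit_sq_eq_sq_add_of_isNilpotent h2μ hnil
  obtain ⟨p, hp⟩ : ∃ p : K[X], aeval b p = s := by
    rw [← AlgHom.mem_range, ← Algebra.adjoin_singleton_eq_range_aeval K b]; exact s.2
  refine ⟨p, ?_, hp ▸ hsu.map B.val⟩
  have hs2' := congrArg Subtype.val hs2
  push_cast at hs2'
  rw [hp, hs2', ← map_pow, hμ, add_sub_cancel]

theorem SemiconjBy.aeval {K A : Type*} [CommSemiring K] [Semiring A] [Algebra K A]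
    {m a b : A} (h : SemiconjBy m a b) (p : K[X]) :
    SemiconjBy m (aeval a p) (aeval b p) := by
  induction p using Polynomial.induction_on' with
  | add p q hp hq => simpa using hp.add_right hq
  | monomial k c =>
    simpa using SemiconjBy.mul_right (Algebra.commute_algebraMap_right c m) (h.pow_right k)

theorem Matrix.transpose_aeval {K R n : Type*} [CommSemiring K] [CommSemiring R] [Algebra K R]
    [Fintype n] [DecidableEq n] (A : Matrix n n R) (p : K[X]) :
    (aeval A p)ᵀ = aeval Aᵀ p := by
  induction p using Polynomial.induction_on' with
  | add p q hp hq => simp [hp, hq]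
  | monomial k c => simp only [aeval_monomial, ← Algebra.smul_def, transpose_smul, transpose_pow]

theorem Matrix.semiconjBy_transpose_of_transpose_eq_neg {n R : Type*} [Fintype n] [CommRing R]
    {M B : Matrix n n R} (hM : Mᵀ = -M) (hMB : (M * B)ᵀ = -(M * B)) : SemiconjBy M B Bᵀ := by
  rw [SemiconjBy, ← neg_neg (M * B), ← hMB, transpose_mul, hM, mul_neg, neg_neg]

/-- Proposition A.3: if `M` is skew-symmetric over a commutative `ℂ`-algebra and
`M * B` is again skew-symmetric, where `B = λ·1 + N` with `λ ≠ 0` and `N` nilpotent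
complex, then there is a complex matrix `S` with `S * S = B` and `M * B = Sᵀ * M * S`;
in particular `S` is invertible. -/
theorem stmt_3 (R : Type*) [CommRing R] [Algebra ℂ R] (n : ℕ)
    (lam : ℂ) (hlam : lam ≠ 0)
    (N : Matrix (Fin n) (Fin n) ℂ) (hN : IsNilpotent N)
    (M : Matrix (Fin n) (Fin n) R) (hM : Mᵀ = -M)
    (hskew :
      (M * ((lam • (1 : Matrix (Fin n) (Fin n) ℂ) + N).map (algebraMap ℂ R)))ᵀ =
      -(M * ((lam • (1 : Matrix (Fin n) (Fin n) ℂ) + N).map (algebraMap ℂ R)))) :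
    ∃ S : Matrix (Fin n) (Fin n) ℂ,
      S * S = lam • (1 : Matrix (Fin n) (Fin n) ℂ) + N ∧
      M * ((lam • (1 : Matrix (Fin n) (Fin n) ℂ) + N).map (algebraMap ℂ R)) =
        (S.map (algebraMap ℂ R))ᵀ * M * (S.map (algebraMap ℂ R)) ∧
      IsUnit S := by
  set B := lam • (1 : Matrix (Fin n) (Fin n) ℂ) + N
  obtain ⟨p, hp, hpu⟩ := exists_isUnit_aeval_sq_eq_self (b := B) hlam
    (by simpa [B, Algebra.algebraMap_eq_smul_one] using hN)
  have hmap : (aeval B p).map (algebraMap ℂ R) = aeval (B.map (algebraMap ℂ R)) p :=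
    (aeval_algHom_apply (Algebra.ofId ℂ R).mapMatrix B p).symm
  have hS := (semiconjBy_transpose_of_transpose_eq_neg hM hskew).aeval p
  rw [← transpose_aeval, ← hmap] at hS
  refine ⟨aeval B p, by rw [← sq, hp], ?_, hpu⟩
  calc M * B.map (algebraMap ℂ R)
      = M * ((aeval B p).map (algebraMap ℂ R) * (aeval B p).map (algebraMap ℂ R)) := by
        rw [← Matrix.map_mul, ← sq, hp]
    _ = _ := by rw [← mul_assoc, hS.eq]
end

section
/- Let R = ℂ[x₀,…,x₄] and let l₀, l₁, l₂, l₃, l₄ be ℂ-linearly independent linear forms in R. Let M_b be the 6×6 block-diagonal skew-symmetric matrix over R with diagonal blocks ((0, l₀, l₁), (−l₀, 0, l₂), (−l₁, −l₂, 0)) and ((0, l₂, l₃), (−l₂, 0, l₄), (−l₃, −l₄, 0)), and let S_bᵀ be the 2×6 matrix with rows (l₂, −l₁, l₀, 0, 0, 0) and (0, 0, 0, l₄, −l₃, l₂). Then the kernel of the R-linear map R⁶ → R² given by v ↦ S_bᵀ·v equals the R-submodule of R⁶ generated by the six columns of M_b. -/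
/-!
Each row of `S_bᵀ` is the Koszul relation `z a - y b + x c = 0` of three of the linearly
independent linear forms, and the corresponding block of `M_b` lists the trivial Koszul
syzygies. A linear change of coordinates turns the linear forms into variables, and variables
form a regular sequence; for a regular sequence `x, y, z` the first Koszul homology vanishes,
i.e. every solution `(a, b, c)` is a combination of the trivial syzygies.
-/

open MvPolynomial Matrix

theorem koszul_syzygy_of_regular {R : Type*} [CommRing R] {x y z a b c : R}
    (hx : IsLeftRegular x) (hy : ∀ b, y * b ∈ Ideal.span {x} → b ∈ Ideal.span {x})
    (hz : ∀ a, z * a ∈ Ideal.span {x, y} → a ∈ Ideal.span {x, y})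
    (h : z * a - y * b + x * c = 0) :
    ∃ p q r, a = x * p + y * q ∧ b = z * q + x * r ∧ c = y * r - z * p := by
  obtain ⟨p, q, hpq⟩ := Ideal.mem_span_pair.1 <|
    hz a (Ideal.mem_span_pair.2 ⟨-c, b, by linear_combination -h⟩)
  have hxy : x * (z * p + c) = y * (b - z * q) := by linear_combination z * hpq + h
  obtain ⟨r, hr⟩ := Ideal.mem_span_singleton'.1 <|
    hy _ (Ideal.mem_span_singleton'.2 ⟨z * p + c, by rw [mul_comm, hxy]⟩)
  have hc : x * (z * p + c) = x * (y * r) := by rw [hxy, ← hr]; ring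
  exact ⟨p, q, r, by linear_combination -hpq, by linear_combination -hr, by
    linear_combination hx hc⟩

namespace MvPolynomial

variable {σ R : Type*} [CommSemiring R]

theorem mem_ideal_span_X_image_of_X_mul_mem {s : Set σ} {k : σ} (hk : k ∉ s)
    {a : MvPolynomial σ R} (h : X k * a ∈ Ideal.span (X '' s)) :
    a ∈ Ideal.span (X '' s) := by
  classical
  rw [mem_ideal_span_X_image] at h ⊢
  intro m hm
  obtain ⟨i, hi, hmi⟩ := h (Finsupp.single k 1 + m) (by
    rw [mem_support_iff, coeff_X_mul]; exact mem_support_iff.1 hm)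
  refine ⟨i, hi, ?_⟩
  rwa [Finsupp.add_apply, Finsupp.single_apply, if_neg (ne_of_mem_of_not_mem hi hk).symm,
    zero_add] at hmi

theorem koszul_syzygy_X {R : Type*} [CommRing R] {i j k : σ} (hij : i ≠ j) (hik : i ≠ k)
    (hjk : j ≠ k) {a b c : MvPolynomial σ R} (h : X k * a - X j * b + X i * c = 0) :
    ∃ p q r, a = X i * p + X j * q ∧ b = X k * q + X i * r ∧ c = X j * r - X k * p := by
  refine koszul_syzygy_of_regular isRegular_X.left (fun b hb => ?_) (fun a ha => ?_) h
  · rw [← Set.image_singleton] at hb ⊢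
    exact mem_ideal_span_X_image_of_X_mul_mem (by simpa using hij.symm) hb
  · rw [← Set.image_pair] at ha ⊢
    exact mem_ideal_span_X_image_of_X_mul_mem (by simp [hik.symm, hjk.symm]) ha

variable [Fintype σ]

noncomputable def linSubst (A : Matrix σ σ R) : MvPolynomial σ R →ₐ[R] MvPolynomial σ R :=
  aeval fun s => ∑ t, A s t • X t

theorem linSubst_X (A : Matrix σ σ R) (s : σ) : linSubst A (X s) = ∑ t, A s t • X t :=
  aeval_X _ _

theorem linSubst_mul (A B : Matrix σ σ R) :
    linSubst (A * B) = (linSubst B).comp (linSubst A) := by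
  ext s : 1
  simp only [AlgHom.comp_apply, linSubst_X, map_sum, map_smul, Finset.smul_sum, smul_smul,
    mul_apply, Finset.sum_smul]
  exact Finset.sum_comm

theorem linSubst_one [DecidableEq σ] : linSubst (1 : Matrix σ σ R) = AlgHom.id R _ := by
  ext s : 1
  simp [linSubst_X, one_apply]

noncomputable def linSubstEquiv [DecidableEq σ] (A : (Matrix σ σ R)ˣ) :
    MvPolynomial σ R ≃ₐ[R] MvPolynomial σ R :=
  AlgEquiv.ofAlgHom (linSubst A) (linSubst ↑A⁻¹)
    (by rw [← linSubst_mul, Units.inv_mul, linSubst_one])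
    (by rw [← linSubst_mul, Units.mul_inv, linSubst_one])

theorem exists_algEquiv_X_eq_of_linearIndependent {K : Type*} [Field K]
    {l : σ → MvPolynomial σ K} (hl : ∀ s, (l s).IsHomogeneous 1)
    (hind : LinearIndependent K l) :
    ∃ e : MvPolynomial σ K ≃ₐ[K] MvPolynomial σ K, ∀ s, e (X s) = l s := by
  classical
  have hspan : ∀ s, ∃ v : σ → K, ∑ t, v t • X t = l s := fun s =>
    Submodule.mem_span_range_iff_exists_fun K |>.1 <|
      homogeneousSubmodule_one_eq_span_X (σ := σ) (R := K) ▸ hl s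
  choose A hA using hspan
  have hrows : LinearIndependent K A :=
    LinearIndependent.of_comp (Fintype.linearCombination K X) <| by
      convert hind using 1
      ext s : 1
      simp [Fintype.linearCombination_apply, hA]
  have hunit : IsUnit (of A) := linearIndependent_rows_iff_isUnit.1 hrows
  exact ⟨linSubstEquiv hunit.unit, fun s => (linSubst_X _ s).trans (hA s)⟩

theorem koszul_syzygy_of_linearIndependent {K : Type*} [Field K] {l : σ → MvPolynomial σ K}
    (hl : ∀ s, (l s).IsHomogeneous 1) (hind : LinearIndependent K l) {i j k : σ}
    (hij : i ≠ j) (hik : i ≠ k) (hjk : j ≠ k) {a b c : MvPolynomial σ K}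
    (h : l k * a - l j * b + l i * c = 0) :
    ∃ p q r, a = l i * p + l j * q ∧ b = l k * q + l i * r ∧ c = l j * r - l k * p := by
  obtain ⟨e, he⟩ := exists_algEquiv_X_eq_of_linearIndependent hl hind
  simp only [← he] at h ⊢
  obtain ⟨p, q, r, ha, hb, hc⟩ := koszul_syzygy_X hij hik hjk (a := e.symm a) (b := e.symm b)
    (c := e.symm c) (by simpa using congrArg e.symm h)
  refine ⟨e p, e q, e r, ?_, ?_, ?_⟩
  · simpa using congrArg e ha
  · simpa using congrArg e hb
  · simpa using congrArg e hc

end MvPolynomial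

/-- Proposition 1.2, case (b): the kernel of `v ↦ S_bᵀ · v` is the submodule
generated by the columns of the block-diagonal skew-symmetric matrix `M_b`. -/
theorem stmt_13 (l₀ l₁ l₂ l₃ l₄ : MvPolynomial (Fin 5) ℂ)
    (h₀ : l₀.IsHomogeneous 1) (h₁ : l₁.IsHomogeneous 1) (h₂ : l₂.IsHomogeneous 1)
    (h₃ : l₃.IsHomogeneous 1) (h₄ : l₄.IsHomogeneous 1)
    (hind : LinearIndependent ℂ ![l₀, l₁, l₂, l₃, l₄]) :
    LinearMap.ker
        (Matrix.mulVecLin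
          (!![l₂, -l₁, l₀, 0, 0, 0;
              0, 0, 0, l₄, -l₃, l₂] : Matrix (Fin 2) (Fin 6) (MvPolynomial (Fin 5) ℂ))) =
      Submodule.span (MvPolynomial (Fin 5) ℂ)
        (Set.range fun j i =>
          (!![0, l₀, l₁, 0, 0, 0;
              -l₀, 0, l₂, 0, 0, 0;
              -l₁, -l₂, 0, 0, 0, 0;
              0, 0, 0, 0, l₂, l₃;
              0, 0, 0, -l₂, 0, l₄;
              0, 0, 0, -l₃, -l₄, 0] : Matrix (Fin 6) (Fin 6) (MvPolynomial (Fin 5) ℂ)) i j) := by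
  set S : Matrix (Fin 2) (Fin 6) (MvPolynomial (Fin 5) ℂ) :=
    !![l₂, -l₁, l₀, 0, 0, 0; 0, 0, 0, l₄, -l₃, l₂]
  set M : Matrix (Fin 6) (Fin 6) (MvPolynomial (Fin 5) ℂ) :=
    !![0, l₀, l₁, 0, 0, 0; -l₀, 0, l₂, 0, 0, 0; -l₁, -l₂, 0, 0, 0, 0;
      0, 0, 0, 0, l₂, l₃; 0, 0, 0, -l₂, 0, l₄; 0, 0, 0, -l₃, -l₄, 0]
  have hl : ∀ s : Fin 5, (![l₀, l₁, l₂, l₃, l₄] s).IsHomogeneous 1 := by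
    intro s; fin_cases s <;> assumption
  rw [show (Set.range fun j i => M i j) = Set.range M.col from rfl, ← range_mulVecLin]
  apply le_antisymm
  · intro v hv
    have e₀ : l₂ * v 0 - l₁ * v 1 + l₀ * v 2 = (S *ᵥ v) 0 := by
      simp [S, mulVec, dotProduct, Fin.sum_univ_succ]; ring
    have e₁ : l₄ * v 3 - l₃ * v 4 + l₂ * v 5 = (S *ᵥ v) 1 := by
      simp [S, mulVec, dotProduct, Fin.sum_univ_succ]; ring
    obtain ⟨p, q, r, h0, h1, h2⟩ := koszul_syzygy_of_linearIndependent (σ := Fin 5) hl hind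
      (i := 0) (j := 1) (k := 2) (by decide) (by decide) (by decide) (e₀.trans (congrFun hv 0))
    obtain ⟨p', q', r', h3, h4, h5⟩ := koszul_syzygy_of_linearIndependent (σ := Fin 5) hl hind
      (i := 2) (j := 3) (k := 4) (by decide) (by decide) (by decide) (e₁.trans (congrFun hv 1))
    refine ⟨![-r, p, q, -r', p', q'], funext fun i => ?_⟩
    fin_cases i <;> simp [M, mulVec, dotProduct, Fin.sum_univ_succ, h0, h1, h2, h3, h4, h5] <;>
      ring
  · have hSM : S * M = 0 := by
      ext i j : 1
      fin_cases i <;> fin_cases j <;> simp [S, M, mul_apply, Fin.sum_univ_succ] <;> ring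
    rw [LinearMap.range_le_ker_iff, ← mulVecLin_mul, hSM, mulVecLin_zero]
end
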